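/- arXiv:2211.04676 — 2 statements merged into one kernel-verified Lean document; each statement's English description precedes it below -/
import Mathlib

section
/- If Ũ₃₁ Σ_k = E₃₁ Ṽ₁₁ + E₃₂ Ṽ₂₁ + E₃₃ Ṽ₃₁ and Ũ₃₁* E₃₃ = Σ_k Ṽ₃₁*, where [Ṽ₁₁; Ṽ₂₁] has spectral norm at most 1, Σ_k is diagonal with smallest entry σ_k > ‖E₃₃‖₂, then for every unitarily invariant norm ⦀·⦀: ⦀Ũ₃₁⦀ ≤ ⦀[E₃₁, E₃₂]⦀ / Γ₁, with Γ₁ = (σ_k² − ‖E₃₃‖₂²)/σ_k. -/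
open Matrix

noncomputable def eigval {n : Type} [Fintype n] [DecidableEq n] {M : Matrix n n ℂ}
    (hM : M.IsHermitian) (j : ℕ) : ℝ :=
  ((Multiset.map hM.eigenvalues Finset.univ.val).sort (· ≤ ·)).getD (Fintype.card n - j) 0

noncomputable def singval {m n : Type} [Fintype m] [Fintype n] [DecidableEq n]
    (M : Matrix m n ℂ) (j : ℕ) : ℝ :=
  Real.sqrt (eigval (Matrix.isHermitian_conjTranspose_mul_self M) j)

/-- A family of unitarily invariant matrix norms (one for every shape). -/
structure UINorm where
  N : ∀ {p q : Type} [Fintype p] [Fintype q] [DecidableEq p] [DecidableEq q],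
      Matrix p q ℂ → ℝ
  nonneg : ∀ {p q : Type} [Fintype p] [Fintype q] [DecidableEq p] [DecidableEq q]
      (M : Matrix p q ℂ), 0 ≤ N M
  triangle : ∀ {p q : Type} [Fintype p] [Fintype q] [DecidableEq p] [DecidableEq q]
      (M₁ M₂ : Matrix p q ℂ), N (M₁ + M₂) ≤ N M₁ + N M₂
  unitary_invariant : ∀ {p q : Type} [Fintype p] [Fintype q] [DecidableEq p] [DecidableEq q]
      (U : Matrix p p ℂ) (M : Matrix p q ℂ) (V : Matrix q q ℂ),
      U ∈ Matrix.unitaryGroup p ℂ → V ∈ Matrix.unitaryGroup q ℂ → N (U * M * V) = N M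
  spec_mul : ∀ {p q r : Type} [Fintype p] [Fintype q] [Fintype r]
      [DecidableEq p] [DecidableEq q] [DecidableEq r]
      (X : Matrix p q ℂ) (Y : Matrix q r ℂ), N (X * Y) ≤ singval X 1 * N Y
  mul_spec : ∀ {p q r : Type} [Fintype p] [Fintype q] [Fintype r]
      [DecidableEq p] [DecidableEq q] [DecidableEq r]
      (X : Matrix p q ℂ) (Y : Matrix q r ℂ), N (X * Y) ≤ N X * singval Y 1

/-! Every entry of `Σ_k` is at least `σ_k`, so right multiplication by `Σ_k` scales any
unitarily invariant norm up by at least `σ_k`. The first relation then gives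
`σ_k ⦀Ũ₃₁⦀ ≤ ⦀[E₃₁, E₃₂]⦀ + ‖E₃₃‖₂ ⦀Ṽ₃₁⦀`, and the second, read as `Ṽ₃₁ Σ_k = E₃₃* Ũ₃₁`, gives
`σ_k ⦀Ṽ₃₁⦀ ≤ ‖E₃₃‖₂ ⦀Ũ₃₁⦀`. Eliminating `⦀Ṽ₃₁⦀` leaves
`(σ_k² - ‖E₃₃‖₂²) ⦀Ũ₃₁⦀ ≤ σ_k ⦀[E₃₁, E₃₂]⦀`. -/

open scoped Matrix.Norms.L2Operator ComplexOrder

lemma eigval_one_isGreatest {n : Type} [Fintype n] [DecidableEq n] [Nonempty n]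
    {M : Matrix n n ℂ} (hM : M.IsHermitian) :
    IsGreatest (Set.range hM.eigenvalues) (eigval hM 1) := by
  set l := (Multiset.map hM.eigenvalues Finset.univ.val).sort (· ≤ ·)
  have hlen : l.length = Fintype.card n := by simp [l]
  have hidx : Fintype.card n - 1 < l.length := by have := Fintype.card_pos (α := n); omega
  have heig : eigval hM 1 = l[Fintype.card n - 1] := List.getD_eq_getElem l 0 hidx
  have hmem : ∀ x, x ∈ l ↔ x ∈ Set.range hM.eigenvalues := by simp [l]
  refine ⟨(hmem _).1 (heig ▸ List.getElem_mem _), ?_⟩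
  rintro _ ⟨i, rfl⟩
  obtain ⟨j, hj, hjv⟩ := List.mem_iff_getElem.mp ((hmem _).2 ⟨i, rfl⟩)
  rw [heig, ← hjv]
  exact (Multiset.pairwise_sort _ _).rel_get_of_le (a := ⟨j, hj⟩) (b := ⟨_, hidx⟩)
    (by simp; omega)

lemma Matrix.IsHermitian.l2_opNorm_eq_norm_eigenvalues {n : Type} [Fintype n] [DecidableEq n]
    {H : Matrix n n ℂ} (hH : H.IsHermitian) : ‖H‖ = ‖hH.eigenvalues‖ := by
  conv_lhs => rw [hH.spectral_theorem]
  rw [Unitary.conjStarAlgAut_apply, ← Unitary.coe_star, CStarRing.norm_mul_coe_unitary,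
    CStarRing.norm_coe_unitary_mul, l2_opNorm_diagonal]
  simp [Pi.norm_def]

lemma Matrix.PosSemidef.eigval_one_eq_l2_opNorm {n : Type} [Fintype n] [DecidableEq n]
    {H : Matrix n n ℂ} (hH : H.PosSemidef) : eigval hH.1 1 = ‖H‖ := by
  rw [hH.1.l2_opNorm_eq_norm_eigenvalues]
  cases isEmpty_or_nonempty n
  · simp [eigval, Subsingleton.elim hH.1.eigenvalues 0]
  · obtain ⟨⟨i, hi⟩, hmax⟩ := eigval_one_isGreatest hH.1
    refine le_antisymm ?_ ((pi_norm_le_iff_of_nonneg ?_).2 fun j => ?_)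
    · rw [← hi]
      exact (Real.le_norm_self _).trans (norm_le_pi_norm _ i)
    · rw [← hi]
      exact hH.eigenvalues_nonneg i
    · rw [Real.norm_of_nonneg (hH.eigenvalues_nonneg j)]
      exact hmax ⟨j, rfl⟩

lemma singval_one_eq_l2_opNorm {m n : Type} [Fintype m] [Fintype n] [DecidableEq n]
    (A : Matrix m n ℂ) : singval A 1 = ‖A‖ := by
  rw [singval, (posSemidef_conjTranspose_mul_self A).eigval_one_eq_l2_opNorm,
    l2_opNorm_conjTranspose_mul_self, Real.sqrt_mul_self (norm_nonneg A)]

namespace UINorm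

variable (nrm : UINorm) {p q r : Type} [Fintype p] [Fintype q] [Fintype r]
  [DecidableEq p] [DecidableEq q] [DecidableEq r]

lemma N_mul_le_l2_opNorm_mul (X : Matrix p q ℂ) (Y : Matrix q r ℂ) :
    nrm.N (X * Y) ≤ ‖X‖ * nrm.N Y :=
  singval_one_eq_l2_opNorm X ▸ nrm.spec_mul X Y

lemma N_mul_le_mul_l2_opNorm (X : Matrix p q ℂ) (Y : Matrix q r ℂ) :
    nrm.N (X * Y) ≤ nrm.N X * ‖Y‖ :=
  singval_one_eq_l2_opNorm Y ▸ nrm.mul_spec X Y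

lemma mul_N_le_N_mul_diagonal {d : q → ℝ} {a : ℝ} (ha : 0 < a) (hd : ∀ i, a ≤ d i)
    (X : Matrix p q ℂ) : a * nrm.N X ≤ nrm.N (X * diagonal fun i => (d i : ℂ)) := by
  set D := diagonal fun i => (d i : ℂ)
  set Dinv := diagonal fun i => ((d i)⁻¹ : ℂ)
  have hD : D * Dinv = 1 := by
    rw [diagonal_mul_diagonal, ← diagonal_one]
    congr 1
    funext i
    exact mul_inv_cancel₀ (Complex.ofReal_ne_zero.2 (ha.trans_le (hd i)).ne')
  have hDinv : ‖Dinv‖ ≤ a⁻¹ := by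
    rw [l2_opNorm_diagonal, pi_norm_le_iff_of_nonneg (inv_nonneg.2 ha.le)]
    intro i
    rw [norm_inv, Complex.norm_real, Real.norm_of_nonneg (ha.le.trans (hd i))]
    exact inv_anti₀ ha (hd i)
  calc a * nrm.N X = a * nrm.N (X * D * Dinv) := by rw [Matrix.mul_assoc, hD, Matrix.mul_one]
    _ ≤ a * (nrm.N (X * D) * a⁻¹) := by
      gcongr
      exact (nrm.N_mul_le_mul_l2_opNorm _ _).trans
        (mul_le_mul_of_nonneg_left hDinv (nrm.nonneg _))
    _ = nrm.N (X * D) := by field_simp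

end UINorm

theorem left_angle_residual_bound_general
    {k p lk nl : ℕ}
    (σ : ℕ → ℝ) (hσdec : ∀ i j : ℕ, 1 ≤ i → i ≤ j → σ j ≤ σ i)
    (U31 : Matrix (Fin p) (Fin k) ℂ)
    (V11 : Matrix (Fin k) (Fin k) ℂ) (V21 : Matrix (Fin lk) (Fin k) ℂ)
    (V31 : Matrix (Fin nl) (Fin k) ℂ)
    (E31 : Matrix (Fin p) (Fin k) ℂ) (E32 : Matrix (Fin p) (Fin lk) ℂ)
    (E33 : Matrix (Fin p) (Fin nl) ℂ)
    (hrel1 : U31 * (Matrix.diagonal fun t : Fin k => (σ ((t : ℕ) + 1) : ℂ)) = E31 * V11 + E32 * V21 + E33 * V31)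
    (hrel2 : U31ᴴ * E33 = (Matrix.diagonal fun t : Fin k => (σ ((t : ℕ) + 1) : ℂ)) * V31ᴴ)
    (hVnorm : singval (Matrix.fromRows V11 V21) 1 ≤ 1)
    (hE33 : singval E33 1 < σ k) :
    ∀ nrm : UINorm,
      nrm.N U31 ≤ nrm.N (Matrix.fromCols E31 E32)
          / ((σ k ^ 2 - singval E33 1 ^ 2) / σ k) := by
  intro nrm
  set S : Matrix (Fin k) (Fin k) ℂ := diagonal fun t : Fin k => (σ ((t : ℕ) + 1) : ℂ)
  rw [singval_one_eq_l2_opNorm] at hVnorm hE33 ⊢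
  have hσk : 0 < σ k := (norm_nonneg E33).trans_lt hE33
  have hσ : ∀ t : Fin k, σ k ≤ σ ((t : ℕ) + 1) := fun t => hσdec _ _ (by omega) (by omega)
  have hU : σ k * nrm.N U31 ≤ nrm.N (fromCols E31 E32) + ‖E33‖ * nrm.N V31 := by
    refine (nrm.mul_N_le_N_mul_diagonal hσk hσ U31).trans ?_
    rw [hrel1, ← fromCols_mul_fromRows]
    refine (nrm.triangle _ _).trans (add_le_add ?_ (nrm.N_mul_le_l2_opNorm_mul _ _))
    exact (nrm.N_mul_le_mul_l2_opNorm _ _).trans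
      (mul_le_of_le_one_right (nrm.nonneg _) hVnorm)
  have hV31 : V31 * S = E33ᴴ * U31 := by
    have hS : Sᴴ = S := by simp [S, diagonal_conjTranspose, Pi.star_def]
    simpa [conjTranspose_mul, hS] using (congrArg conjTranspose hrel2).symm
  have hV : σ k * nrm.N V31 ≤ ‖E33‖ * nrm.N U31 := by
    refine (nrm.mul_N_le_N_mul_diagonal hσk hσ V31).trans ?_
    rw [hV31, ← l2_opNorm_conjTranspose E33]
    exact nrm.N_mul_le_l2_opNorm_mul _ _
  have hΓ : 0 < (σ k ^ 2 - ‖E33‖ ^ 2) / σ k := by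
    have := norm_nonneg E33
    apply div_pos _ hσk
    nlinarith
  rw [le_div_iff₀ hΓ, mul_div_assoc', div_le_iff₀ hσk]
  linarith [mul_le_mul_of_nonneg_left hU hσk.le, mul_le_mul_of_nonneg_left hV (norm_nonneg E33)]

/-- If Ũ₃₁ Σ_k = E₃₁ Ṽ₁₁ + E₃₂ Ṽ₂₁ + E₃₃ Ṽ₃₁ and Ũ₃₁* E₃₃ = Σ_k Ṽ₃₁*, with
‖[Ṽ₁₁; Ṽ₂₁]‖₂ ≤ 1 and ‖E₃₃‖₂ < σ_k, then ⦀Ũ₃₁⦀ ≤ ⦀[E₃₁, E₃₂]⦀/Γ₁ for every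
unitarily invariant norm, where Γ₁ = (σ_k² − ‖E₃₃‖₂²)/σ_k. -/
theorem left_angle_residual_bound
    {k p lk nl : ℕ}
    (σ : ℕ → ℝ) (hσdec : ∀ i j : ℕ, 1 ≤ i → i ≤ j → σ j ≤ σ i) (hσk : 0 < σ k)
    (U31 : Matrix (Fin p) (Fin k) ℂ)
    (V11 : Matrix (Fin k) (Fin k) ℂ) (V21 : Matrix (Fin lk) (Fin k) ℂ)
    (V31 : Matrix (Fin nl) (Fin k) ℂ)
    (E31 : Matrix (Fin p) (Fin k) ℂ) (E32 : Matrix (Fin p) (Fin lk) ℂ)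
    (E33 : Matrix (Fin p) (Fin nl) ℂ)
    (hrel1 : U31 * (Matrix.diagonal fun t : Fin k => (σ ((t : ℕ) + 1) : ℂ)) = E31 * V11 + E32 * V21 + E33 * V31)
    (hrel2 : U31ᴴ * E33 = (Matrix.diagonal fun t : Fin k => (σ ((t : ℕ) + 1) : ℂ)) * V31ᴴ)
    (hVnorm : singval (Matrix.fromRows V11 V21) 1 ≤ 1)
    (hE33 : singval E33 1 < σ k) :
    ∀ nrm : UINorm,
      nrm.N U31 ≤ nrm.N (Matrix.fromCols E31 E32)
          / ((σ k ^ 2 - singval E33 1 ^ 2) / σ k) :=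
  left_angle_residual_bound_general σ hσdec U31 V11 V21 V31 E31 E32 E33 hrel1 hrel2 hVnorm hE33
end

section
/- Under the relations Σ_k Ṽ₂₁* = Ũ₂₁* Σ̂_{l∖k} + Ũ₃₁* E₃₂ and Ũ₂₁ Σ_k = Σ̂_{l∖k} Ṽ₂₁, with σ̂_{k+1} := ‖Σ̂_{l∖k}‖₂ < σ_k, for any unitarily invariant norm: ⦀Ṽ₂₁⦀ ≤ (‖E₃₂‖₂/γ₁)·⦀Ũ₃₁⦀, where γ₁ = (σ_k² − σ̂_{k+1}²)/σ_k. -/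
open Matrix

/-!
Right multiplication by `Σ_k` enlarges a unitarily invariant norm by at least the factor `σ_k`,
because `‖Σ_k⁻¹‖₂ ≤ 1 / σ_k`. The conjugate transpose of the second relation reads
`Ṽ₂₁ Σ_k = Σ̂ Ũ₂₁ + E₃₂* Ũ₃₁`, whence `σ_k ⦀Ṽ₂₁⦀ ≤ σ̂ ⦀Ũ₂₁⦀ + ‖E₃₂‖₂ ⦀Ũ₃₁⦀`, and the first
relation gives `σ_k ⦀Ũ₂₁⦀ ≤ σ̂ ⦀Ṽ₂₁⦀`. Eliminating `⦀Ũ₂₁⦀` leaves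
`(σ_k² - σ̂²) ⦀Ṽ₂₁⦀ ≤ σ_k ‖E₃₂‖₂ ⦀Ũ₃₁⦀`. That `‖E₃₂*‖₂ = ‖E₃₂‖₂` comes from `E*E` and `EE*`
having the same nonzero eigenvalues: their characteristic polynomials agree up to a power of `X`.
-/

open Polynomial
open scoped ComplexOrder

namespace Matrix.IsHermitian

variable {n : Type} [Fintype n] [DecidableEq n] {A : Matrix n n ℂ} (hA : A.IsHermitian)

lemma isRoot_charpoly_iff {z : ℂ} : A.charpoly.IsRoot z ↔ ∃ i, (hA.eigenvalues i : ℂ) = z := by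
  rw [← Polynomial.mem_roots (charpoly_monic A).ne_zero, hA.roots_charpoly_eq_eigenvalues]
  simp

lemma eigval_eq_zero_or_mem_range (j : ℕ) :
    eigval hA j = 0 ∨ eigval hA j ∈ Set.range hA.eigenvalues := by
  unfold eigval
  rw [List.getD_eq_getElem?_getD]
  cases h : ((Multiset.map hA.eigenvalues Finset.univ.val).sort (· ≤ ·))[Fintype.card n - j]? with
  | none => simp
  | some x =>
    have hx := List.mem_of_getElem? h
    simp only [Multiset.mem_sort, Multiset.mem_map, Finset.mem_val, Finset.mem_univ, true_and] at hx
    simpa using Or.inr hx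

lemma eigenvalues_le_eigval_one (i : n) : hA.eigenvalues i ≤ eigval hA 1 := by
  set l := (Multiset.map hA.eigenvalues Finset.univ.val).sort (· ≤ ·) with hl
  have hmem : hA.eigenvalues i ∈ l := by simp [l, Multiset.mem_sort]
  have hlen : l.length = Fintype.card n := by simp [l]
  have hpos : 0 < l.length := List.length_pos_of_mem hmem
  calc hA.eigenvalues i ≤ l.getLast (List.ne_nil_of_mem hmem) :=
        (Multiset.pairwise_sort _ _).rel_getLast hmem
    _ = eigval hA 1 := by
        rw [List.getLast_eq_getElem, eigval, ← hl, List.getD_eq_getElem _ _ (by omega)]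
        simp only [hlen]

lemma eigval_one_le_of_isRoot {b : ℝ} (hb : 0 ≤ b)
    (h : ∀ x : ℝ, A.charpoly.IsRoot x → x ≤ b) : eigval hA 1 ≤ b := by
  obtain h0 | ⟨i, hi⟩ := hA.eigval_eq_zero_or_mem_range 1
  · exact h0 ▸ hb
  · exact hi ▸ h _ ((hA.isRoot_charpoly_iff).mpr ⟨i, rfl⟩)

end Matrix.IsHermitian

lemma Matrix.PosSemidef.eigval_nonneg {n : Type} [Fintype n] [DecidableEq n] {A : Matrix n n ℂ}
    (hA : A.PosSemidef) (j : ℕ) : 0 ≤ eigval hA.isHermitian j := by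
  obtain h0 | ⟨i, hi⟩ := hA.isHermitian.eigval_eq_zero_or_mem_range j
  · exact h0.ge
  · exact hi ▸ hA.eigenvalues_nonneg i

section singval

variable {m n : Type} [Fintype m] [Fintype n] [DecidableEq n]

lemma singval_nonneg (M : Matrix m n ℂ) (j : ℕ) : 0 ≤ singval M j := Real.sqrt_nonneg _

lemma singval_one_le {M : Matrix m n ℂ} {b : ℝ} (hb : 0 ≤ b)
    (h : ∀ x : ℝ, (Mᴴ * M).charpoly.IsRoot x → x ≤ b ^ 2) : singval M 1 ≤ b :=
  Real.sqrt_le_iff.mpr ⟨hb, (isHermitian_conjTranspose_mul_self M).eigval_one_le_of_isRoot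
    (sq_nonneg b) h⟩

lemma singval_one_le_singval_conjTranspose [DecidableEq m] (M : Matrix m n ℂ) :
    singval M 1 ≤ singval Mᴴ 1 := by
  refine singval_one_le (singval_nonneg _ _) fun x hx => ?_
  rcases le_or_gt x 0 with hx0 | hx0
  · exact hx0.trans (sq_nonneg _)
  have hroot : (Mᴴᴴ * Mᴴ).charpoly.IsRoot x := by
    have h := congrArg (Polynomial.eval (x : ℂ)) (charpoly_mul_comm' M Mᴴ)
    simp only [eval_mul, eval_pow, eval_X, hx.eq_zero, mul_zero] at h
    rw [conjTranspose_conjTranspose]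
    exact (mul_eq_zero.mp h).resolve_left (pow_ne_zero _ (Complex.ofReal_ne_zero.mpr hx0.ne'))
  obtain ⟨i, hi⟩ := (isHermitian_conjTranspose_mul_self Mᴴ).isRoot_charpoly_iff.mp hroot
  rw [singval, Real.sq_sqrt ((posSemidef_conjTranspose_mul_self Mᴴ).eigval_nonneg 1),
    ← Complex.ofReal_injective hi]
  exact (isHermitian_conjTranspose_mul_self Mᴴ).eigenvalues_le_eigval_one i

lemma singval_conjTranspose [DecidableEq m] (M : Matrix m n ℂ) : singval Mᴴ 1 = singval M 1 :=
  le_antisymm (by simpa using singval_one_le_singval_conjTranspose Mᴴ)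
    (singval_one_le_singval_conjTranspose M)

lemma singval_diagonal_le {d : n → ℂ} {b : ℝ} (hb : 0 ≤ b) (hd : ∀ i, ‖d i‖ ≤ b) :
    singval (diagonal d) 1 ≤ b := by
  refine singval_one_le hb fun x hx => ?_
  rw [diagonal_conjTranspose, diagonal_mul_diagonal, charpoly_diagonal, IsRoot,
    eval_prod, Finset.prod_eq_zero_iff] at hx
  obtain ⟨i, -, hi⟩ := hx
  have hxi : x = ‖d i‖ ^ 2 := by
    rw [eval_sub, eval_X, eval_C, sub_eq_zero, Pi.star_apply, RCLike.star_def,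
      Complex.conj_mul'] at hi
    exact_mod_cast hi
  exact hxi ▸ pow_le_pow_left₀ (norm_nonneg _) (hd i) 2

end singval

lemma UINorm.mul_N_le_N_mul_diagonal_s11 (nrm : UINorm) {p q : Type} [Fintype p] [Fintype q]
    [DecidableEq p] [DecidableEq q] {d : q → ℂ} {c : ℝ} (hc : 0 < c) (hd : ∀ i, c ≤ ‖d i‖)
    (X : Matrix p q ℂ) : c * nrm.N X ≤ nrm.N (X * diagonal d) := by
  have hinv : diagonal d * diagonal d⁻¹ = 1 := by
    rw [diagonal_mul_diagonal, ← diagonal_one]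
    exact congrArg diagonal
      (funext fun i => mul_inv_cancel₀ (norm_pos_iff.mp (hc.trans_le (hd i))))
  have hsv : singval (diagonal d⁻¹) 1 ≤ c⁻¹ :=
    singval_diagonal_le (inv_nonneg.mpr hc.le) fun i => by
      rw [Pi.inv_apply, norm_inv]
      exact inv_anti₀ hc (hd i)
  calc c * nrm.N X = c * nrm.N (X * diagonal d * diagonal d⁻¹) := by
        rw [Matrix.mul_assoc, hinv, Matrix.mul_one]
    _ ≤ c * (nrm.N (X * diagonal d) * c⁻¹) := by
        gcongr
        exact (nrm.mul_spec _ _).trans (mul_le_mul_of_nonneg_left hsv (nrm.nonneg _))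
    _ = nrm.N (X * diagonal d) := by field_simp

/-- Under Ũ₂₁ Σ_k = Σ̂ Ṽ₂₁ and Σ_k Ṽ₂₁* = Ũ₂₁* Σ̂ + Ũ₃₁* E₃₂ with
σ̂_{k+1} = ‖Σ̂‖₂ < σ_k, every unitarily invariant norm satisfies
⦀Ṽ₂₁⦀ ≤ (‖E₃₂‖₂/γ₁)·⦀Ũ₃₁⦀ where γ₁ = (σ_k² − σ̂_{k+1}²)/σ_k. -/
theorem V21_bound
    {k p lk : ℕ}
    (σ : ℕ → ℝ) (hσdec : ∀ i j : ℕ, 1 ≤ i → i ≤ j → σ j ≤ σ i) (hσk : 0 < σ k)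
    (Shat : Matrix (Fin lk) (Fin lk) ℂ)
    (hShat : ∃ d : Fin lk → ℝ, Shat = Matrix.diagonal fun t => (d t : ℂ))
    (σhat : ℝ) (hσhat : σhat = singval Shat 1) (hlt : σhat < σ k)
    (U21 : Matrix (Fin lk) (Fin k) ℂ) (V21 : Matrix (Fin lk) (Fin k) ℂ)
    (U31 : Matrix (Fin p) (Fin k) ℂ) (E32 : Matrix (Fin p) (Fin lk) ℂ)
    (hrel1 : U21 * (Matrix.diagonal fun t : Fin k => (σ ((t : ℕ) + 1) : ℂ)) = Shat * V21)
    (hrel2 : (Matrix.diagonal fun t : Fin k => (σ ((t : ℕ) + 1) : ℂ)) * V21ᴴ = U21ᴴ * Shat + U31ᴴ * E32) :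
    ∀ nrm : UINorm,
      nrm.N V21 ≤ (singval E32 1 / ((σ k ^ 2 - σhat ^ 2) / σ k)) * nrm.N U31 := by
  intro nrm
  have hσD : ∀ t : Fin k, σ k ≤ ‖(σ ((t : ℕ) + 1) : ℂ)‖ := fun t => by
    have hσt := hσdec (t + 1) k (by omega) (by omega)
    rwa [Complex.norm_real, Real.norm_of_nonneg (hσk.le.trans hσt)]
  have hShatH : Shatᴴ = Shat := by
    obtain ⟨d, rfl⟩ := hShat
    simp [diagonal_conjTranspose]
  have hVD : V21 * (diagonal fun t : Fin k => (σ ((t : ℕ) + 1) : ℂ)) =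
      Shat * U21 + E32ᴴ * U31 := by
    simpa [conjTranspose_mul, diagonal_conjTranspose, Pi.star_def, hShatH]
      using congrArg conjTranspose hrel2
  have hV : σ k * nrm.N V21 ≤ σhat * nrm.N U21 + singval E32 1 * nrm.N U31 := calc
    σ k * nrm.N V21 ≤ nrm.N (Shat * U21 + E32ᴴ * U31) :=
      hVD ▸ nrm.mul_N_le_N_mul_diagonal_s11 hσk hσD V21
    _ ≤ nrm.N (Shat * U21) + nrm.N (E32ᴴ * U31) := nrm.triangle _ _
    _ ≤ _ := add_le_add (hσhat ▸ nrm.spec_mul _ _) (singval_conjTranspose E32 ▸ nrm.spec_mul _ _)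
  have hU : σ k * nrm.N U21 ≤ σhat * nrm.N V21 := calc
    σ k * nrm.N U21 ≤ nrm.N (Shat * V21) := hrel1 ▸ nrm.mul_N_le_N_mul_diagonal_s11 hσk hσD U21
    _ ≤ σhat * nrm.N V21 := hσhat ▸ nrm.spec_mul _ _
  have hσhat0 : 0 ≤ σhat := hσhat ▸ singval_nonneg Shat 1
  have hgap : 0 < σ k ^ 2 - σhat ^ 2 := by nlinarith
  have hV' : (σ k ^ 2 - σhat ^ 2) * nrm.N V21 ≤ σ k * singval E32 1 * nrm.N U31 := by
    nlinarith [mul_le_mul_of_nonneg_left hU hσhat0, mul_le_mul_of_nonneg_left hV hσk.le]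
  rw [div_div_eq_mul_div, div_mul_eq_mul_div, le_div_iff₀ hgap]
  linarith
end
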